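/- arXiv:2311.05545 — 4 statements merged into one kernel-verified Lean document; each statement's English description precedes it below -/
import Mathlib

section
/- Let r and d be positive integers and let L = {(z₁,…,z_d) ∈ ℤ^d : r divides ∑_{i=1}^{d} i·zᵢ}, an additive subgroup of ℤ^d. Then any subset A ⊆ L that generates L as an additive group contains a vector z = (z₁,…,z_d) with ∑_{i=1}^{d} i·zᵢ ≠ 0, and any such z satisfies r ≤ |∑_{i=1}^{d} i·zᵢ| ≤ d^{3/2}·‖z‖. Consequently, A contains a vector of Euclidean norm at least r/d^{3/2}. -/
/-- The lattice `L = {(z₁,…,z_d) ∈ ℤ^d : r ∣ ∑ᵢ i·zᵢ}` as an additive subgroup of `ℤ^d`. -/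
def sumLat (r d : ℕ) : AddSubgroup (Fin d → ℤ) where
  carrier := {z | (r : ℤ) ∣ ∑ i : Fin d, ((i : ℕ) + 1 : ℤ) * z i}
  zero_mem' := by simp
  add_mem' := by
    intro a b ha hb
    simp only [Set.mem_setOf_eq, Pi.add_apply, mul_add, Finset.sum_add_distrib] at *
    exact dvd_add ha hb
  neg_mem' := by
    intro a ha
    simp only [Set.mem_setOf_eq, Pi.neg_apply, mul_neg, Finset.sum_neg_distrib] at *
    exact dvd_neg.mpr ha

/-- The Euclidean norm of an integer vector. -/
noncomputable def intNorm {d : ℕ} (z : Fin d → ℤ) : ℝ :=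
  Real.sqrt (∑ i, ((z i : ℝ)) ^ 2)

/-- Any generating set `A` of `L = {z ∈ ℤ^d : r ∣ ∑ᵢ i·zᵢ}` contains a vector `z` with
`∑ᵢ i·zᵢ ≠ 0`; any such `z` satisfies `r ≤ |∑ᵢ i·zᵢ| ≤ d^{3/2}·‖z‖`; consequently `A`
contains a vector of Euclidean norm at least `r/d^{3/2}`. -/
theorem statement4 (r d : ℕ) (hr : 0 < r) (hd : 0 < d) (A : Set (Fin d → ℤ))
    (hA : A ⊆ (sumLat r d : Set (Fin d → ℤ)))
    (hgen : AddSubgroup.closure A = sumLat r d) :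
    (∃ z ∈ A, ∑ i : Fin d, ((i : ℕ) + 1 : ℤ) * z i ≠ 0) ∧
    (∀ z ∈ A, ∑ i : Fin d, ((i : ℕ) + 1 : ℤ) * z i ≠ 0 →
      (r : ℝ) ≤ ((|∑ i : Fin d, ((i : ℕ) + 1 : ℤ) * z i| : ℤ) : ℝ) ∧
      ((|∑ i : Fin d, ((i : ℕ) + 1 : ℤ) * z i| : ℤ) : ℝ) ≤
        (d : ℝ) ^ ((3 : ℝ) / 2) * intNorm z) ∧
    ∃ z ∈ A, (r : ℝ) / (d : ℝ) ^ ((3 : ℝ) / 2) ≤ intNorm z := by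
  set φ : (Fin d → ℤ) →+ ℤ :=
    { toFun := fun z => ∑ i : Fin d, ((i : ℕ) + 1 : ℤ) * z i
      map_zero' := by simp
      map_add' := by
        intro a b
        simp [mul_add, Finset.sum_add_distrib] } with hφ
  have hrpow : (d : ℝ) ^ ((3 : ℝ) / 2) = d * Real.sqrt d := by
    rw [show (3 : ℝ)/2 = 1 + 1/2 by norm_num,
      Real.rpow_add (by exact_mod_cast hd), Real.rpow_one, ← Real.sqrt_eq_rpow]
  have hpowpos : 0 < (d : ℝ) ^ ((3 : ℝ) / 2) := by
    apply Real.rpow_pos_of_pos; exact_mod_cast hd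
  have hex : ∃ z ∈ A, ∑ i : Fin d, ((i : ℕ) + 1 : ℤ) * z i ≠ 0 := by
    by_contra h
    push_neg at h
    have hker : AddSubgroup.closure A ≤ φ.ker := by
      rw [AddSubgroup.closure_le]
      intro a ha
      simpa [AddMonoidHom.mem_ker, hφ] using h a ha
    set v : Fin d → ℤ := fun i => if i = ⟨0, hd⟩ then (r : ℤ) else 0 with hv
    have hvmem : v ∈ sumLat r d := by
      simp only [sumLat, AddSubgroup.mem_mk, Set.mem_setOf_eq, hv,
        mul_ite, mul_zero, Finset.sum_ite_eq', Finset.mem_univ, if_true]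
      simp
    have := hker (hgen ▸ hvmem)
    simp only [AddMonoidHom.mem_ker, hφ, AddMonoidHom.coe_mk, ZeroHom.coe_mk, hv,
      mul_ite, mul_zero, Finset.sum_ite_eq', Finset.mem_univ, if_true] at this
    simp at this
    omega
  have hmain : ∀ z ∈ A, ∑ i : Fin d, ((i : ℕ) + 1 : ℤ) * z i ≠ 0 →
      (r : ℝ) ≤ ((|∑ i : Fin d, ((i : ℕ) + 1 : ℤ) * z i| : ℤ) : ℝ) ∧
      ((|∑ i : Fin d, ((i : ℕ) + 1 : ℤ) * z i| : ℤ) : ℝ) ≤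
        (d : ℝ) ^ ((3 : ℝ) / 2) * intNorm z := by
    intro z hz hne
    have hdvd : (r : ℤ) ∣ ∑ i : Fin d, ((i : ℕ) + 1 : ℤ) * z i := hA hz
    constructor
    · have : (r : ℤ) ≤ |∑ i : Fin d, ((i : ℕ) + 1 : ℤ) * z i| :=
        Int.le_of_dvd (abs_pos.mpr hne) ((dvd_abs _ _).mpr hdvd)
      exact_mod_cast this
    · have h1 : ((|∑ i : Fin d, ((i : ℕ) + 1 : ℤ) * z i| : ℤ) : ℝ)
          ≤ ∑ i : Fin d, (d : ℝ) * |(z i : ℝ)| := by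
        rw [Int.cast_abs]
        push_cast
        refine le_trans (Finset.abs_sum_le_sum_abs _ _) (Finset.sum_le_sum ?_)
        intro i _
        rw [abs_mul, abs_of_nonneg (by positivity)]
        apply mul_le_mul_of_nonneg_right _ (abs_nonneg _)
        have := i.2
        have : ((i : ℕ) : ℝ) + 1 ≤ d := by exact_mod_cast this
        linarith
      have h2 : ∑ i : Fin d, |(z i : ℝ)| ≤ Real.sqrt d * intNorm z := by
        rw [intNorm, ← Real.sqrt_mul (by positivity)]
        apply Real.le_sqrt_of_sq_le
        have := sq_sum_le_card_mul_sum_sq (s := (Finset.univ : Finset (Fin d)))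
          (f := fun i => |(z i : ℝ)|)
        simpa [sq_abs, Finset.card_univ] using this
      calc ((|∑ i : Fin d, ((i : ℕ) + 1 : ℤ) * z i| : ℤ) : ℝ)
          ≤ ∑ i : Fin d, (d : ℝ) * |(z i : ℝ)| := h1
        _ = (d : ℝ) * ∑ i : Fin d, |(z i : ℝ)| := by rw [Finset.mul_sum]
        _ ≤ (d : ℝ) * (Real.sqrt d * intNorm z) := by
            apply mul_le_mul_of_nonneg_left h2 (by positivity)
        _ = (d : ℝ) ^ ((3 : ℝ) / 2) * intNorm z := by rw [hrpow, mul_assoc]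
  refine ⟨hex, hmain, ?_⟩
  obtain ⟨z, hzA, hzne⟩ := hex
  obtain ⟨hlo, hhi⟩ := hmain z hzA hzne
  refine ⟨z, hzA, ?_⟩
  rw [div_le_iff₀ hpowpos]
  calc (r : ℝ) ≤ _ := hlo
    _ ≤ _ := hhi
    _ = intNorm z * (d : ℝ) ^ ((3:ℝ)/2) := mul_comm _ _
end

section
/- Let G be a finite commutative group and let g₁, …, g_d ∈ G generate G. Suppose the relation lattice L(g₁,…,g_d) ⊆ ℤ^d has a ℤ-basis b₁, …, b_d with ‖bᵢ‖ ≤ T for all i, for some real T > 0. Then every element u ∈ G can be written as u = ∏_{i=1}^{d} gᵢ^{zᵢ} for some (z₁,…,z_d) ∈ ℤ^d of Euclidean norm at most √d · T. -/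
/-- The relation lattice `L(g₁,…,gₜ) = {(z₁,…,zₜ) ∈ ℤᵗ : ∏ᵢ gᵢ^{zᵢ} = 1}`,
as an additive subgroup of `ℤᵗ`. -/
def relLattice {G : Type*} [CommGroup G] {t : ℕ} (g : Fin t → G) :
    AddSubgroup (Fin t → ℤ) where
  carrier := {z | ∏ i, g i ^ z i = 1}
  zero_mem' := by simp
  add_mem' := by
    intro a b ha hb
    simp only [Set.mem_setOf_eq, Pi.add_apply] at *
    simp [zpow_add, Finset.prod_mul_distrib, ha, hb]
  neg_mem' := by
    intro a ha
    simp only [Set.mem_setOf_eq, Pi.neg_apply] at *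
    simp [zpow_neg, Finset.prod_inv_distrib, ha]

/-!
Babai's nearest-plane rounding: if `x` lies in the real span of `b₀, …, bₙ`, round the
coefficient of `bₙ`, project orthogonally onto the span of the remaining vectors and recurse.
The error orthogonal to that span is at most `‖bₙ‖ / 2`, and by Pythagoras the squared errors
add up, giving integers `c` with `‖x - ∑ cᵢ bᵢ‖² ≤ ¼ ∑ ‖bᵢ‖²`.

Since `G` is finite, `|G| • x` is a relation for every exponent vector `x`, so the relation
lattice spans `ℝᵈ`. Rounding an exponent vector `x` of `u` against the short basis gives a
relation `∑ cᵢ bᵢ` with `x - ∑ cᵢ bᵢ` short, and it still represents `u`.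
-/

open Submodule Finset

section NearestPlane

variable {E : Type*} [NormedAddCommGroup E] [InnerProductSpace ℝ E]

lemma norm_sub_starProjection_add_smul_le (K : Submodule ℝ E) [K.HasOrthogonalProjection]
    {s : E} (hs : s ∈ K) (f : ℝ) (w : E) :
    ‖s + f • w - K.starProjection (s + f • w)‖ ≤ |f| * ‖w‖ := by
  rw [← starProjection_orthogonal_val, map_add, starProjection_orthogonal_apply_eq_zero hs,
    zero_add, map_smul, norm_smul, Real.norm_eq_abs]
  exact mul_le_mul_of_nonneg_left (Kᗮ.norm_starProjection_apply_le w) (abs_nonneg f)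

theorem exists_zsmul_sum_norm_sub_sq_le :
    ∀ {n : ℕ} (b : Fin n → E) {x : E}, x ∈ span ℝ (Set.range b) →
      ∃ c : Fin n → ℤ, ‖x - ∑ i, c i • b i‖ ^ 2 ≤ (∑ i, ‖b i‖ ^ 2) / 4
  | 0, b, x, hx => ⟨0, by simp_all⟩
  | n + 1, b, x, hx => by
    obtain ⟨r, rfl⟩ := (mem_span_range_iff_exists_fun ℝ).mp hx
    set K := span ℝ (Set.range (Fin.init b))
    have : FiniteDimensional ℝ K := FiniteDimensional.span_of_finite ℝ (Set.finite_range _)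
    set m := round (r (Fin.last n))
    set y := ∑ i, r i • b i - m • b (Fin.last n)
    set s := ∑ i, r (Fin.castSucc i) • Fin.init b i
    have hs : s ∈ K := sum_mem fun i _ => smul_mem _ _ (subset_span ⟨i, rfl⟩)
    have hy : y = s + (r (Fin.last n) - m) • b (Fin.last n) := by
      simp only [y, s, Fin.init, Fin.sum_univ_castSucc, sub_smul, Int.cast_smul_eq_zsmul]
      abel
    have hres : ‖y - K.starProjection y‖ ≤ ‖b (Fin.last n)‖ / 2 := by
      rw [hy]
      calc _ ≤ |r (Fin.last n) - m| * ‖b (Fin.last n)‖ :=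
            norm_sub_starProjection_add_smul_le K hs _ _
        _ ≤ 1 / 2 * ‖b (Fin.last n)‖ := by gcongr; exact abs_sub_round _
        _ = ‖b (Fin.last n)‖ / 2 := by ring
    obtain ⟨c, hc⟩ :=
      exists_zsmul_sum_norm_sub_sq_le (Fin.init b) (K.starProjection_apply_mem y)
    set v := ∑ i, c i • Fin.init b i
    refine ⟨Fin.snoc c m, ?_⟩
    have hsplit : ∑ i, r i • b i - ∑ i, (Fin.snoc c m : Fin (n + 1) → ℤ) i • b i
        = (y - K.starProjection y) + (K.starProjection y - v) := by
      rw [Fin.sum_univ_castSucc (f := fun i => (Fin.snoc c m : Fin (n + 1) → ℤ) i • b i)]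
      simp only [y, v, Fin.init, Fin.snoc_castSucc, Fin.snoc_last]
      abel
    have hv : v ∈ K := sum_mem fun i _ => zsmul_mem (subset_span (Set.mem_range_self i)) _
    have horth : inner ℝ (y - K.starProjection y) (K.starProjection y - v) = 0 :=
      inner_left_of_mem_orthogonal (sub_mem (K.starProjection_apply_mem y) hv)
        (sub_starProjection_mem_orthogonal y)
    rw [hsplit, norm_add_sq_real, horth, Fin.sum_univ_castSucc]
    have hres_sq := pow_le_pow_left₀ (norm_nonneg _) hres 2
    simp only [Fin.init] at hc
    linarith

end NearestPlane

section RelationLattice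

variable {G : Type*} [CommGroup G] {t : ℕ} (g : Fin t → G)

lemma mem_relLattice {z : Fin t → ℤ} : z ∈ relLattice g ↔ ∏ i, g i ^ z i = 1 := Iff.rfl

lemma card_nsmul_mem_relLattice [Finite G] (x : Fin t → ℤ) :
    Nat.card G • x ∈ relLattice g := by
  simp [mem_relLattice, mul_comm _ (x _), zpow_mul, pow_card_eq_one']

lemma prod_zpow_sub_of_mem_relLattice {z : Fin t → ℤ} (hz : z ∈ relLattice g)
    (x : Fin t → ℤ) :
    ∏ i, g i ^ (x - z) i = ∏ i, g i ^ x i := by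
  simp [zpow_sub, prod_mul_distrib, prod_inv_distrib, (mem_relLattice g).mp hz]

end RelationLattice

noncomputable def intToEuclidean (d : ℕ) : (Fin d → ℤ) →+ EuclideanSpace ℝ (Fin d) :=
  AddMonoidHom.mk' (fun z => WithLp.toLp 2 fun i => (z i : ℝ)) fun a b => by ext; simp

lemma norm_intToEuclidean {d : ℕ} (z : Fin d → ℤ) : ‖intToEuclidean d z‖ = intNorm z := by
  simp [intToEuclidean, EuclideanSpace.norm_eq, intNorm]

theorem statement6_general {G : Type*} [CommGroup G] [Finite G] (d : ℕ)
    (g : Fin d → G) (hgen : Subgroup.closure (Set.range g) = ⊤)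
    (T : ℝ) (hT : 0 < T) (b : Fin d → (Fin d → ℤ))
    (hbmem : ∀ i, b i ∈ relLattice g)
    (hbasis : ∀ z ∈ relLattice g, ∃! c : Fin d → ℤ, z = ∑ i, c i • b i)
    (hbnorm : ∀ i, intNorm (b i) ≤ T) :
    ∀ u : G, ∃ z : Fin d → ℤ,
      u = ∏ i, g i ^ z i ∧ intNorm z ≤ Real.sqrt d * T := by
  intro u
  obtain ⟨x, rfl⟩ := Subgroup.exists_of_mem_closure_range g u (hgen ▸ Subgroup.mem_top u)
  set ι := intToEuclidean d
  obtain ⟨c, hc, -⟩ := hbasis _ (card_nsmul_mem_relLattice g x)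
  have hx : ι x ∈ span ℝ (Set.range (ι ∘ b)) := by
    have hN : (Nat.card G : ℝ) ≠ 0 := Nat.cast_ne_zero.mpr Nat.card_pos.ne'
    rw [← smul_mem_iff _ hN, Nat.cast_smul_eq_nsmul, ← map_nsmul, hc, map_sum]
    exact sum_mem fun i _ => by
      rw [map_zsmul]; exact zsmul_mem (subset_span (Set.mem_range_self i)) _
  obtain ⟨k, hk⟩ := exists_zsmul_sum_norm_sub_sq_le (ι ∘ b) hx
  have hkmem : ∑ i, k i • b i ∈ relLattice g :=
    sum_mem fun i _ => zsmul_mem (hbmem i) _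
  refine ⟨x - ∑ i, k i • b i, (prod_zpow_sub_of_mem_relLattice g hkmem x).symm, ?_⟩
  have hbsq : ∑ i, ‖ι (b i)‖ ^ 2 ≤ d * T ^ 2 := by
    calc ∑ i, ‖ι (b i)‖ ^ 2 ≤ ∑ _i : Fin d, T ^ 2 := sum_le_sum fun i _ =>
          pow_le_pow_left₀ (norm_nonneg _) ((norm_intToEuclidean _).trans_le (hbnorm i)) 2
      _ = d * T ^ 2 := by simp
  simp only [Function.comp_apply] at hk
  calc intNorm (x - ∑ i, k i • b i) = ‖ι x - ∑ i, k i • ι (b i)‖ := by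
        simp only [← norm_intToEuclidean, map_sub, map_sum, map_zsmul, ι]
    _ ≤ √d * T := by
        rw [← sq_le_sq₀ (norm_nonneg _) (by positivity), mul_pow, Real.sq_sqrt d.cast_nonneg]
        linarith [show 0 ≤ (d : ℝ) * T ^ 2 by positivity]

/-- If `g₁,…,g_d` generate the finite commutative group `G` and the relation lattice
`L(g₁,…,g_d)` has a ℤ-basis of vectors of norm at most `T`, then every `u ∈ G` can be
written as `u = ∏ᵢ gᵢ^{zᵢ}` with `‖z‖ ≤ √d · T`. -/
theorem statement6 {G : Type*} [CommGroup G] [Finite G] (d : ℕ) (hd : 0 < d)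
    (g : Fin d → G) (hgen : Subgroup.closure (Set.range g) = ⊤)
    (T : ℝ) (hT : 0 < T) (b : Fin d → (Fin d → ℤ))
    (hbmem : ∀ i, b i ∈ relLattice g)
    (hbasis : ∀ z ∈ relLattice g, ∃! c : Fin d → ℤ, z = ∑ i, c i • b i)
    (hbnorm : ∀ i, intNorm (b i) ≤ T) :
    ∀ u : G, ∃ z : Fin d → ℤ,
      u = ∏ i, g i ^ z i ∧ intNorm z ≤ Real.sqrt d * T :=
  statement6_general d g hgen T hT b hbmem hbasis hbnorm
end

section
/- Let d, m be positive integers, let L be an additive subgroup of ℤ^d, let δ > 0 and S > 0 be reals, and let v₁, …, v_m, w₁, …, w_m ∈ ℝ^d be such that for each i: (a) ⟨u, vᵢ⟩ ∈ ℤ for every u ∈ L, and (b) there exists κᵢ ∈ ℤ^d with ‖wᵢ − vᵢ − κᵢ‖ < δ. Let L′ be the additive subgroup of ℝ^{d+m} generated by the d + m rows of the block matrix B whose first d rows are (e_j, S·(w₁)_j, …, S·(w_m)_j) for j = 1,…,d (e_j the j-th standard basis vector of ℝ^d) and whose last m rows are (0, S·f_i) for i = 1,…,m (f_i the i-th standard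 basis vector of ℝ^m). Then for every u ∈ L there exists u′ ∈ L′ whose first d coordinates equal u and whose Euclidean norm satisfies ‖u′‖ ≤ ‖u‖·(1 + m·S²·δ²)^{1/2}. -/
/-- The `j`-th of the first `d` rows of the block matrix `B`:
`(e_j, S·(w₁)_j, …, S·(w_m)_j)`, where `e_j` is the `j`-th standard basis vector. -/
def rowTop {d m : ℕ} (S : ℝ) (w : Fin m → Fin d → ℝ) (j : Fin d) :
    (Fin d → ℝ) × (Fin m → ℝ) :=
  (fun j' => if j' = j then 1 else 0, fun i => S * w i j)

/-- The `i`-th of the last `m` rows of the block matrix `B`: `(0, S·f_i)`, where `f_i`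
is the `i`-th standard basis vector of `ℝ^m`. -/
def rowBot {d m : ℕ} (S : ℝ) (i : Fin m) : (Fin d → ℝ) × (Fin m → ℝ) :=
  (0, fun i' => if i' = i then S else 0)

/-- The additive subgroup `L′` of `ℝ^{d+m} = ℝ^d × ℝ^m` generated by the `d + m` rows
of the block matrix `B`. -/
def blockLattice {d m : ℕ} (S : ℝ) (w : Fin m → Fin d → ℝ) :
    AddSubgroup ((Fin d → ℝ) × (Fin m → ℝ)) :=
  AddSubgroup.closure (Set.range (Sum.elim (rowTop S w) (rowBot S)))

/-- The Euclidean norm of a vector of `ℝ^{d+m}`, written as a pair. -/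
noncomputable def pairNorm {d m : ℕ} (x : (Fin d → ℝ) × (Fin m → ℝ)) : ℝ :=
  Real.sqrt (∑ j, x.1 j ^ 2 + ∑ i, x.2 i ^ 2)

/-- The Euclidean norm of a vector of `ℝ^n`. -/
noncomputable def vecNorm {n : ℕ} (x : Fin n → ℝ) : ℝ :=
  Real.sqrt (∑ i, x i ^ 2)

/-- Lemma 4.4, first part: if each `wᵢ` is within distance `δ` (mod `ℤ^d`) of a coset
representative `vᵢ` of `L*/ℤ^d`, then every `u ∈ L` lifts to a vector `u′ ∈ L′` whose
first `d` coordinates equal `u` and with `‖u′‖ ≤ ‖u‖·(1 + m·S²·δ²)^{1/2}`. -/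
theorem statement8 (d m : ℕ) (hd : 0 < d) (hm : 0 < m)
    (L : AddSubgroup (Fin d → ℤ)) (δ S : ℝ) (hδ : 0 < δ) (hS : 0 < S)
    (v w : Fin m → Fin d → ℝ)
    (hv : ∀ i, ∀ u ∈ L, ∃ n : ℤ, ∑ j, (u j : ℝ) * v i j = n)
    (hw : ∀ i, ∃ κ : Fin d → ℤ, vecNorm (fun j => w i j - v i j - (κ j : ℝ)) < δ) :
    ∀ u ∈ L, ∃ u' ∈ blockLattice S w,
      u'.1 = (fun j => (u j : ℝ)) ∧
      pairNorm u' ≤ vecNorm (fun j => (u j : ℝ)) * Real.sqrt (1 + m * S ^ 2 * δ ^ 2) := by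
  intro u hu
  choose n hn using fun i => hv i u hu
  choose κ hκ using hw
  set ε : Fin m → Fin d → ℝ := fun i j => w i j - v i j - (κ i j : ℝ) with hε
  set c : Fin m → ℤ := fun i => -(n i) - ∑ j, u j * κ i j with hc
  set u' : (Fin d → ℝ) × (Fin m → ℝ) :=
    (∑ j, (u j) • rowTop S w j) + (∑ i, (c i) • rowBot S i) with hu'
  have h1 : u'.1 = fun j => (u j : ℝ) := by
    funext j'
    simp only [hu', Prod.fst_add, Prod.fst_sum, Prod.smul_fst, rowTop, rowBot,
      Finset.sum_apply, Pi.add_apply, Pi.smul_apply, Pi.zero_apply, smul_zero]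
    simp only [zsmul_eq_mul, mul_ite, mul_one, mul_zero]
    simp
  have h2 : ∀ i, u'.2 i = S * ∑ j, (u j : ℝ) * ε i j := by
    intro i
    have hval : u'.2 i = ∑ j, (u j : ℝ) * (S * w i j) + (c i : ℝ) * S := by
      simp only [hu', Prod.snd_add, Prod.snd_sum, Prod.smul_snd, rowTop, rowBot,
        Finset.sum_apply, Pi.add_apply, Pi.smul_apply]
      simp only [zsmul_eq_mul, mul_ite, mul_zero]
      simp
    have hA : ∑ j, (u j : ℝ) * (S * w i j) = S * ∑ j, (u j : ℝ) * w i j := by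
      rw [Finset.mul_sum]; exact Finset.sum_congr rfl fun j _ => by ring
    have e1 : ∑ j, (u j : ℝ) * ε i j
        = ∑ j, (u j : ℝ) * w i j - ∑ j, (u j : ℝ) * v i j
          - ∑ j, (u j : ℝ) * (κ i j : ℝ) := by
      simp only [hε]
      rw [← Finset.sum_sub_distrib, ← Finset.sum_sub_distrib]
      exact Finset.sum_congr rfl fun j _ => by ring
    rw [hval, hA, e1, hc]
    push_cast
    linear_combination S * hn i
  -- bounds
  set U : ℝ := ∑ j, (u j : ℝ) ^ 2 with hU
  have hU0 : 0 ≤ U := Finset.sum_nonneg fun j _ => sq_nonneg _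
  have hεδ : ∀ i, ∑ j, ε i j ^ 2 ≤ δ ^ 2 := by
    intro i
    have h := hκ i
    have hnn : 0 ≤ ∑ j, ε i j ^ 2 := Finset.sum_nonneg fun j _ => sq_nonneg _
    have hs : Real.sqrt (∑ j, ε i j ^ 2) < δ := h
    nlinarith [Real.sq_sqrt hnn, Real.sqrt_nonneg (∑ j, ε i j ^ 2)]
  have hterm : ∀ i, u'.2 i ^ 2 ≤ S ^ 2 * U * δ ^ 2 := by
    intro i
    rw [h2 i]
    have cs := Finset.sum_mul_sq_le_sq_mul_sq Finset.univ (fun j => (u j : ℝ)) (ε i)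
    have hεnn : 0 ≤ ∑ j, ε i j ^ 2 := Finset.sum_nonneg fun j _ => sq_nonneg _
    have h3 : (∑ j, (u j : ℝ) * ε i j) ^ 2 ≤ U * δ ^ 2 := by
      calc (∑ j, (u j : ℝ) * ε i j) ^ 2 ≤ U * ∑ j, ε i j ^ 2 := cs
        _ ≤ U * δ ^ 2 := by nlinarith [hεδ i]
    calc (S * ∑ j, (u j : ℝ) * ε i j) ^ 2 = S ^ 2 * (∑ j, (u j : ℝ) * ε i j) ^ 2 := by ring
      _ ≤ S ^ 2 * (U * δ ^ 2) := by nlinarith [sq_nonneg S]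
      _ = S ^ 2 * U * δ ^ 2 := by ring
  refine ⟨u', ?_, h1, ?_⟩
  · apply AddSubgroup.add_mem
    · exact AddSubgroup.sum_mem _ fun j _ => AddSubgroup.zsmul_mem _
        (AddSubgroup.subset_closure (Set.mem_range_self (Sum.inl j))) _
    · exact AddSubgroup.sum_mem _ fun i _ => AddSubgroup.zsmul_mem _
        (AddSubgroup.subset_closure (Set.mem_range_self (Sum.inr i))) _
  · have hsum1 : ∑ j, u'.1 j ^ 2 = U := by rw [h1]
    have hsum2 : ∑ i, u'.2 i ^ 2 ≤ (m : ℝ) * (S ^ 2 * U * δ ^ 2) := by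
      calc ∑ i, u'.2 i ^ 2 ≤ ∑ _i : Fin m, S ^ 2 * U * δ ^ 2 :=
            Finset.sum_le_sum fun i _ => hterm i
        _ = (m : ℝ) * (S ^ 2 * U * δ ^ 2) := by
            rw [Finset.sum_const, Finset.card_univ, Fintype.card_fin, nsmul_eq_mul]
    unfold pairNorm vecNorm
    rw [← Real.sqrt_mul hU0]
    apply Real.sqrt_le_sqrt
    rw [hsum1]
    calc U + ∑ i, u'.2 i ^ 2 ≤ U + (m : ℝ) * (S ^ 2 * U * δ ^ 2) := by linarith
      _ = U * (1 + (m : ℝ) * S ^ 2 * δ ^ 2) := by ring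
end

section
/- Let d, m be positive integers, let I ⊔ J be a partition of {1,…,m} with |I| = m₁, let L be an additive subgroup of ℤ^d, let δ > 0 and S > 0 be reals with S·δ ≤ 1, and let w₁, …, w_m ∈ ℝ^d. Suppose that for each i ∈ I there exist vᵢ ∈ ℝ^d and κᵢ ∈ ℤ^d such that ⟨u, vᵢ⟩ ∈ ℤ for every u ∈ L and ‖wᵢ − vᵢ − κᵢ‖ < δ. Let L″ be the additive subgroup of ℝ^{d+m} generated by the d + m rows of the block matrix with first d rows (e_j, S·(w₁)_j, …, S·(w_m)_j) for j = 1,…,d and last m rows (0, S·f_i) for i = 1,…,m. Then for every u ∈ L and every family of integers (b_j)_{j∈J}, there exists u″ ∈ L″ whose first d coordinates equal u, whose coordinate indexed by d + j equals S·(⟨u, w_j⟩ + b_j) for each j ∈ J, and whose Euclidean norm satisfies ‖u″‖² ≤ ‖x‖² + m₁·‖u‖², where x ∈ ℝ^{d+|J|} denotes the vector consisting of u followed by the entries S·(⟨u, w_j⟩ + b_j) for j ∈ J; in particular ‖u″‖ ≤ √(1 + m₁)·‖x‖. -/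
/-- Robust version of the lifting lemma: let `I ⊔ J` partition `{1,…,m}` with
`|I| = m₁`, where the runs indexed by `I` are good (close to cosets of `L*/ℤ^d`).
Then for every `u ∈ L` and every family of integers `(b_j)_{j ∈ J}` there is a vector
`u″ ∈ L″` whose first `d` coordinates equal `u`, whose coordinate indexed by `d + j`
equals `S·(⟨u, w_j⟩ + b_j)` for each `j ∈ J`, and with
`‖u″‖² ≤ ‖x‖² + m₁·‖u‖²`, where `x` consists of `u` followed by the entries
`S·(⟨u, w_j⟩ + b_j)` for `j ∈ J`; in particular `‖u″‖ ≤ √(1 + m₁)·‖x‖`. -/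
theorem statement11 (d m m₁ : ℕ) (hd : 0 < d) (hm : 0 < m)
    (I J : Finset (Fin m)) (hdisj : Disjoint I J) (hunion : I ∪ J = Finset.univ)
    (hI : I.card = m₁)
    (L : AddSubgroup (Fin d → ℤ)) (δ S : ℝ) (hδ : 0 < δ) (hS : 0 < S)
    (hSδ : S * δ ≤ 1) (w : Fin m → Fin d → ℝ)
    (hgood : ∀ i ∈ I, ∃ (v : Fin d → ℝ) (κ : Fin d → ℤ),
      (∀ u ∈ L, ∃ n : ℤ, ∑ j, (u j : ℝ) * v j = n) ∧
      vecNorm (fun j => w i j - v j - (κ j : ℝ)) < δ) :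
    ∀ u ∈ L, ∀ b : Fin m → ℤ,
      ∃ u'' ∈ blockLattice S w,
        u''.1 = (fun j => (u j : ℝ)) ∧
        (∀ j ∈ J, u''.2 j = S * ((∑ j', (u j' : ℝ) * w j j') + (b j : ℝ))) ∧
        pairNorm u'' ^ 2 ≤
          ((∑ j', (u j' : ℝ) ^ 2) +
              ∑ j ∈ J, (S * ((∑ j', (u j' : ℝ) * w j j') + (b j : ℝ))) ^ 2) +
            (m₁ : ℝ) * ∑ j', (u j' : ℝ) ^ 2 ∧
        pairNorm u'' ≤ Real.sqrt (1 + m₁) *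
          Real.sqrt ((∑ j', (u j' : ℝ) ^ 2) +
            ∑ j ∈ J, (S * ((∑ j', (u j' : ℝ) * w j j') + (b j : ℝ))) ^ 2) := by
  classical
  intro u hu b
  set U : ℝ := ∑ j', (u j' : ℝ) ^ 2 with hU
  have hUnn : 0 ≤ U := Finset.sum_nonneg fun _ _ => sq_nonneg _
  -- key: for good indices, we can choose an integer making the coordinate small
  have key : ∀ i ∈ I, ∃ c : ℤ,
      (S * ((∑ j', (u j' : ℝ) * w i j') + (c : ℝ))) ^ 2 ≤ U := by
    intro i hi
    obtain ⟨v, κ, hv, hκ⟩ := hgood i hi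
    obtain ⟨n, hn⟩ := hv u hu
    refine ⟨-(n + ∑ j, u j * κ j), ?_⟩
    have ht : (∑ j', (u j' : ℝ) * w i j') + ((-(n + ∑ j, u j * κ j) : ℤ) : ℝ)
        = ∑ j, (u j : ℝ) * (w i j - v j - (κ j : ℝ)) := by
      push_cast
      rw [← hn]
      simp only [mul_sub, Finset.sum_sub_distrib]
      ring
    rw [ht]
    have hCS : (∑ j, (u j : ℝ) * (w i j - v j - (κ j : ℝ))) ^ 2 ≤
        U * ∑ j, (w i j - v j - (κ j : ℝ)) ^ 2 :=
      Finset.sum_mul_sq_le_sq_mul_sq Finset.univ _ _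
    have hρ : ∑ j, (w i j - v j - (κ j : ℝ)) ^ 2 ≤ δ ^ 2 := by
      have := hκ
      unfold vecNorm at this
      have h1 : ∑ j, (w i j - v j - (κ j : ℝ)) ^ 2 < δ ^ 2 :=
        (Real.sqrt_lt' hδ).mp this
      linarith
    have hSδnn : 0 ≤ S * δ := by positivity
    have hSδ2 : (S * δ) ^ 2 ≤ 1 := by nlinarith
    have hρnn : 0 ≤ ∑ j, (w i j - v j - (κ j : ℝ)) ^ 2 :=
      Finset.sum_nonneg fun _ _ => sq_nonneg _
    nlinarith [mul_le_mul_of_nonneg_left hCS (sq_nonneg S),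
      mul_le_mul_of_nonneg_left hρ (mul_nonneg (sq_nonneg S) hUnn),
      mul_le_mul_of_nonneg_right hSδ2 hUnn]
  -- choose the integer coefficients
  set c : Fin m → ℤ := fun i => if h : i ∈ I then (key i h).choose else b i with hc
  have hc1 : ∀ i ∈ I, (S * ((∑ j', (u j' : ℝ) * w i j') + (c i : ℝ))) ^ 2 ≤ U := by
    intro i hi
    simp only [hc, dif_pos hi]
    exact (key i hi).choose_spec
  have hc2 : ∀ i ∈ J, c i = b i := by
    intro i hi
    have : i ∉ I := fun hI' => (Finset.disjoint_left.mp hdisj) hI' hi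
    simp [hc, this]
  -- the lattice vector
  set u'' : (Fin d → ℝ) × (Fin m → ℝ) :=
    (∑ j : Fin d, (u j) • rowTop S w j) + (∑ i : Fin m, (c i) • rowBot S i) with hu''
  have hmem : u'' ∈ blockLattice S w := by
    refine AddSubgroup.add_mem _ (AddSubgroup.sum_mem _ fun j _ => ?_)
      (AddSubgroup.sum_mem _ fun i _ => ?_)
    · exact AddSubgroup.zsmul_mem _
        (AddSubgroup.subset_closure (Set.mem_range_self (Sum.inl j))) _
    · exact AddSubgroup.zsmul_mem _
        (AddSubgroup.subset_closure (Set.mem_range_self (Sum.inr i))) _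
  have h1 : u''.1 = fun j => (u j : ℝ) := by
    funext j'
    simp [hu'', rowTop, rowBot, Prod.fst_sum, Finset.sum_apply, zsmul_eq_mul,
      mul_ite, mul_one, mul_zero]
  have h2 : ∀ i, u''.2 i = S * ((∑ j', (u j' : ℝ) * w i j') + (c i : ℝ)) := by
    intro i
    have : u''.2 i = (∑ j, (u j : ℝ) * (S * w i j)) + (c i : ℝ) * S := by
      simp [hu'', rowTop, rowBot, Prod.snd_sum, Finset.sum_apply, zsmul_eq_mul,
        mul_ite, mul_zero]
    rw [this, mul_add, Finset.mul_sum]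
    congr 1
    · exact Finset.sum_congr rfl fun j _ => by ring
    · ring
  have hsq : pairNorm u'' ^ 2 =
      U + ∑ i, (S * ((∑ j', (u j' : ℝ) * w i j') + (c i : ℝ))) ^ 2 := by
    unfold pairNorm
    rw [Real.sq_sqrt]
    · rw [h1]
      congr 1
      exact Finset.sum_congr rfl fun i _ => by rw [h2 i]
    · refine add_nonneg (Finset.sum_nonneg fun _ _ => sq_nonneg _)
        (Finset.sum_nonneg fun _ _ => sq_nonneg _)
  have hsplit : (∑ i, (S * ((∑ j', (u j' : ℝ) * w i j') + (c i : ℝ))) ^ 2)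
      = (∑ i ∈ I, (S * ((∑ j', (u j' : ℝ) * w i j') + (c i : ℝ))) ^ 2)
        + ∑ i ∈ J, (S * ((∑ j', (u j' : ℝ) * w i j') + (c i : ℝ))) ^ 2 := by
    rw [← Finset.sum_union hdisj, hunion]
  have hJeq : (∑ i ∈ J, (S * ((∑ j', (u j' : ℝ) * w i j') + (c i : ℝ))) ^ 2)
      = ∑ j ∈ J, (S * ((∑ j', (u j' : ℝ) * w j j') + (b j : ℝ))) ^ 2 :=
    Finset.sum_congr rfl fun i hi => by rw [hc2 i hi]
  have hIle : (∑ i ∈ I, (S * ((∑ j', (u j' : ℝ) * w i j') + (c i : ℝ))) ^ 2)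
      ≤ (m₁ : ℝ) * U := by
    calc _ ≤ ∑ i ∈ I, U := Finset.sum_le_sum hc1
    _ = (m₁ : ℝ) * U := by rw [Finset.sum_const, hI, nsmul_eq_mul]
  have hbound : pairNorm u'' ^ 2 ≤
      (U + ∑ j ∈ J, (S * ((∑ j', (u j' : ℝ) * w j j') + (b j : ℝ))) ^ 2)
        + (m₁ : ℝ) * U := by
    rw [hsq, hsplit, hJeq]; linarith
  refine ⟨u'', hmem, h1, fun j hj => by rw [h2 j, hc2 j hj], hbound, ?_⟩
  -- the final norm inequality
  set X : ℝ := U + ∑ j ∈ J, (S * ((∑ j', (u j' : ℝ) * w j j') + (b j : ℝ))) ^ 2 with hX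
  have hXnn : 0 ≤ X := add_nonneg hUnn (Finset.sum_nonneg fun _ _ => sq_nonneg _)
  have hUX : U ≤ X := le_add_of_nonneg_right (Finset.sum_nonneg fun _ _ => sq_nonneg _)
  have hPnn : 0 ≤ pairNorm u'' := Real.sqrt_nonneg _
  have hP2 : pairNorm u'' ^ 2 ≤ (1 + (m₁ : ℝ)) * X := by
    have : (m₁ : ℝ) * U ≤ (m₁ : ℝ) * X :=
      mul_le_mul_of_nonneg_left hUX (Nat.cast_nonneg _)
    nlinarith
  calc pairNorm u'' = Real.sqrt (pairNorm u'' ^ 2) := by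
        rw [Real.sqrt_sq hPnn]
    _ ≤ Real.sqrt ((1 + (m₁ : ℝ)) * X) := Real.sqrt_le_sqrt hP2
    _ = Real.sqrt (1 + (m₁ : ℝ)) * Real.sqrt X :=
        Real.sqrt_mul (by positivity) _
end
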